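/- arXiv:2508.16102 — 2 statements merged into one kernel-verified Lean document; each statement's English description precedes it below -/
import Mathlib

section
/- Let d ≥ 1 be an integer, γ ∈ ℝ_{>0} ∖ {1}, α ∈ (0,1], r > 2, and j ∈ ℤ. Let E ⊆ ℝ have bounded α-Assouad characteristic and let 𝓔_j be a maximally 2^{-γj}-separated subset of E. Define 𝓚_r(t,s) = (1 + 2^{γj}|t−s|)^{−d(1/2 − 1/r)}. (i) If d(1/2 − 1/r) > α/s for some s ∈ [1,∞), then sup_{τ' ∈ 𝓔_j} ‖𝓚_r(·, τ')‖_{ℓ^s_τ(𝓔_j)} ≤ C [E]_α^{1/s} and sup_{τ ∈ 𝓔_j} ‖𝓚_r(τ, ·)‖_{ℓ^s_{τ'}(𝓔_j)} ≤ C [E]_α^{1/s}, with C independent of j. (ii) If d(1/2 − 1/r) = α/s, then the corresponding bounds hold with the weak-ℓ^{s,∞} quasinorm in place of the ℓ^s norm, with C independent of j. -/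
open MeasureTheory Complex Set Metric
open scoped ENNReal NNReal Classical

noncomputable section

/-- The Fourier transform of `f` on `ℝ^d`. -/
def ftransform {d : ℕ} (f : EuclideanSpace ℝ (Fin d) → ℂ) (ξ : EuclideanSpace ℝ (Fin d)) : ℂ :=
  ∫ x, Complex.exp (-(Complex.I * ((inner ℝ x ξ : ℝ) : ℂ))) * f x

/-- The fractional Schrödinger propagator `U^γ_t f`. -/
def Uprop (d : ℕ) (γ t : ℝ) (f : EuclideanSpace ℝ (Fin d) → ℂ)
    (x : EuclideanSpace ℝ (Fin d)) : ℂ :=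
  (((2 * Real.pi) ^ (-(d : ℝ)) : ℝ) : ℂ) *
    ∫ ξ, Complex.exp (Complex.I * (((inner ℝ x ξ : ℝ) + t * ‖ξ‖ ^ γ : ℝ) : ℂ)) * ftransform f ξ

/-- `U^γ_t P_j f`, the propagator applied to the Littlewood–Paley piece `P_j f`,
where `P_j f = (ψ(2^{-j}|·|) f̂)^∨`. -/
def UpropLP (d : ℕ) (γ : ℝ) (ψ : ℝ → ℝ) (j : ℤ) (t : ℝ) (f : EuclideanSpace ℝ (Fin d) → ℂ)
    (x : EuclideanSpace ℝ (Fin d)) : ℂ :=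
  (((2 * Real.pi) ^ (-(d : ℝ)) : ℝ) : ℂ) *
    ∫ ξ, Complex.exp (Complex.I * (((inner ℝ x ξ : ℝ) + t * ‖ξ‖ ^ γ : ℝ) : ℂ)) *
      ((ψ ((2:ℝ) ^ (-j) * ‖ξ‖) : ℝ) : ℂ) * ftransform f ξ

/-- `U^γ_t P_{≤ 0} f`, where `P_{≤0} = Id - ∑_{j ≥ 1} P_j`. -/
def UpropLPle0 (d : ℕ) (γ : ℝ) (ψ : ℝ → ℝ) (t : ℝ) (f : EuclideanSpace ℝ (Fin d) → ℂ)
    (x : EuclideanSpace ℝ (Fin d)) : ℂ :=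
  (((2 * Real.pi) ^ (-(d : ℝ)) : ℝ) : ℂ) *
    ∫ ξ, Complex.exp (Complex.I * (((inner ℝ x ξ : ℝ) + t * ‖ξ‖ ^ γ : ℝ) : ℂ)) *
      (((1 - ∑' n : ℕ, ψ ((2:ℝ) ^ (-((n : ℤ) + 1)) * ‖ξ‖)) : ℝ) : ℂ) * ftransform f ξ

/-- The operator `T_{t,s} = U^γ_t P_j (U^γ_s P_j)^*`, given by its explicit kernel formula. -/
def Tkernel (d : ℕ) (γ : ℝ) (ψ : ℝ → ℝ) (j : ℤ) (t s : ℝ)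
    (g : EuclideanSpace ℝ (Fin d) → ℂ) (x : EuclideanSpace ℝ (Fin d)) : ℂ :=
  (((2 * Real.pi) ^ (-(d : ℝ)) : ℝ) : ℂ) *
    ∫ ξ, Complex.exp (Complex.I * (((inner ℝ x ξ : ℝ) + (t - s) * ‖ξ‖ ^ γ : ℝ) : ℂ)) *
      (((ψ ((2:ℝ) ^ (-j) * ‖ξ‖)) ^ 2 : ℝ) : ℂ) * ftransform g ξ

/-- The mixed norm `‖F‖_{L^q_t(μ; L^r_x(ν))}`. -/
def mixedNorm {d : ℕ} (q r : ℝ≥0∞) (μ : Measure ℝ)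
    (ν : Measure (EuclideanSpace ℝ (Fin d)))
    (F : ℝ → EuclideanSpace ℝ (Fin d) → ℂ) : ℝ≥0∞ :=
  if q = ∞ then essSup (fun t => eLpNorm (F t) r ν) μ
  else (∫⁻ t, eLpNorm (F t) r ν ^ q.toReal ∂μ) ^ (1 / q.toReal)

/-- The inhomogeneous Sobolev norm `‖f‖_{H^s}`. -/
def sobolevNorm {d : ℕ} (s : ℝ) (f : EuclideanSpace ℝ (Fin d) → ℂ) : ℝ :=
  Real.sqrt (∫ ξ, (1 + ‖ξ‖ ^ 2) ^ s * ‖ftransform f ξ‖ ^ 2)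

/-- The homogeneous Sobolev norm `‖f‖_{Ḣ^s}`. -/
def homSobolevNorm {d : ℕ} (s : ℝ) (f : EuclideanSpace ℝ (Fin d) → ℂ) : ℝ :=
  Real.sqrt (∫ ξ, ‖ξ‖ ^ (2 * s) * ‖ftransform f ξ‖ ^ 2)

/-- `N(E, δ)`: the minimal number of (closed) intervals of length `δ` needed to cover `E`
(`∞` if no finite cover exists). -/
def coverNum (E : Set ℝ) (δ : ℝ) : ℝ≥0∞ :=
  ⨅ (S : Finset ℝ) (_ : E ⊆ ⋃ c ∈ S, Set.Icc c (c + δ)), (S.card : ℝ≥0∞)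

/-- The (global) `α`-Assouad characteristic `[E]_α`. -/
def assouadChar (α : ℝ) (E : Set ℝ) : ℝ≥0∞ :=
  ⨆ (δ : ℝ) (_ : 0 < δ) (a : ℝ) (b : ℝ) (_ : δ ≤ b - a),
    ENNReal.ofReal ((δ / (b - a)) ^ α) * coverNum (E ∩ Set.Icc a b) δ

/-- The `(α, θ)`-Assouad characteristic `[E]_{α,θ}`, where the supremum is taken over
intervals `I ⊆ [0,1]`. -/
def assouadCharSpec (α θ : ℝ) (E : Set ℝ) : ℝ≥0∞ :=
  ⨆ (a : ℝ) (b : ℝ) (_ : a < b) (_ : Set.Icc a b ⊆ Set.Icc (0:ℝ) 1),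
    ENNReal.ofReal (((b - a) ^ (1 / θ) / (b - a)) ^ α) *
      coverNum (E ∩ Set.Icc a b) ((b - a) ^ (1 / θ))

/-- `⟨μ⟩_α`: the best constant in the `α`-dimensional growth condition
`μ((t-ρ, t+ρ)) ≤ C ρ^α`. -/
def growthConst (α : ℝ) (μ : Measure ℝ) : ℝ≥0∞ :=
  ⨆ (t : ℝ) (ρ : ℝ) (_ : 0 < ρ), μ (Set.Ioo (t - ρ) (t + ρ)) / ENNReal.ofReal (ρ ^ α)

/-- The `ℓ^q` norm of a family indexed by a set `S ⊆ ℝ`. -/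
def lqNorm (q : ℝ≥0∞) (S : Set ℝ) (a : ℝ → ℝ≥0∞) : ℝ≥0∞ :=
  if q = ∞ then ⨆ τ ∈ S, a τ
  else (∑' τ : S, a τ ^ q.toReal) ^ (1 / q.toReal)

/-- The weak `ℓ^{s,∞}` quasinorm of a family indexed by a set `S ⊆ ℝ`. -/
def weakLqNorm (s : ℝ) (S : Set ℝ) (a : ℝ → ℝ≥0∞) : ℝ≥0∞ :=
  ⨆ (l : ℝ) (_ : 0 < l),
    ENNReal.ofReal l * (({τ ∈ S | ENNReal.ofReal l < a τ}.encard : ℝ≥0∞)) ^ (1 / s)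

/-- The conjugate exponent, with exponents recorded in `ℝ≥0∞`. -/
def conjExp (p : ℝ≥0∞) : ℝ≥0∞ := ENNReal.ofReal ((1 - (p⁻¹).toReal)⁻¹)

/-- `S` is a `δ`-separated subset of `E`. -/
def IsSepSubset (δ : ℝ) (S E : Set ℝ) : Prop :=
  S ⊆ E ∧ ∀ τ ∈ S, ∀ τ' ∈ S, τ ≠ τ' → δ ≤ |τ - τ'|

/-- `S` is a maximally `δ`-separated subset of `E`. -/
def IsMaxSepSubset (δ : ℝ) (S E : Set ℝ) : Prop :=
  IsSepSubset δ S E ∧ ∀ t ∈ E, ∃ τ ∈ S, |t - τ| ≤ δ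

/-- The indicator `χ_k` of the dyadic region `2^{k-1} < 2^{γj}|t-s| ≤ 2^k` (for `k ≥ 1`),
resp. `2^{γj}|t-s| ≤ 1` (for `k = 0`). -/
def chiK (γ : ℝ) (j : ℤ) (k : ℕ) (t s : ℝ) : ℝ :=
  if k = 0 then (if (2:ℝ) ^ (γ * j) * |t - s| ≤ 1 then 1 else 0)
  else (if (2:ℝ) ^ ((k:ℝ) - 1) < (2:ℝ) ^ (γ * j) * |t - s| ∧
      (2:ℝ) ^ (γ * j) * |t - s| ≤ (2:ℝ) ^ (k:ℝ) then 1 else 0)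

/-!
A `δ`-separated subset of `E` meets an interval `I` with `|I| ≥ δ` in at most
`2 N(E ∩ I, δ) ≤ 2 (|I| / δ)^α [E]_α` points. Cutting the kernel `(1 + δ⁻¹|τ - σ|)^{-β}` along the
scaled balls `δ⁻¹|τ - σ| ≤ 2^k`, the `s`-th power sum is dominated by
`[E]_α ∑_k 2^{k(α - βs)}`, a convergent geometric series when `βs > α`. When `βs = α`, the
superlevel set `{kernel > λ}` is the scaled ball of radius `λ^{-1/β}`, whose cardinality is
`≲ λ^{-s} [E]_α`: this is the weak-type bound. With `δ = 2^{-γj}` none of the constants sees `j`.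
-/

namespace IsSepSubset

variable {δ : ℝ} {S E : Set ℝ}

theorem encard_inter_Icc_le_two (hS : IsSepSubset δ S E) (c : ℝ) :
    (S ∩ Icc c (c + δ)).encard ≤ 2 := by
  by_cases hsub : (S ∩ Icc c (c + δ)).Subsingleton
  · exact (encard_le_one_iff_subsingleton.mpr hsub).trans one_le_two
  -- two distinct points of `S` at distance `≤ δ` are the endpoints of the interval
  have hend : S ∩ Icc c (c + δ) ⊆ {c, c + δ} := by
    intro u hu
    obtain ⟨v, hv, hvu⟩ := exists_ne_of_one_lt_encard
      (one_lt_encard_iff_nontrivial.mpr (not_subsingleton_iff.mp hsub)) u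
    have hsep := hS.2 u hu.1 v hv.1 hvu.symm
    obtain ⟨⟨hcu, huc⟩, ⟨hcv, hvc⟩⟩ := And.intro hu.2 hv.2
    show u = c ∨ u = c + δ
    rcases abs_cases (u - v) with ⟨h, _⟩ | ⟨h, _⟩
    · right; linarith
    · left; linarith
  calc (S ∩ Icc c (c + δ)).encard ≤ ({c, c + δ} : Set ℝ).encard := encard_le_encard hend
    _ ≤ 2 := (encard_insert_le _ _).trans (by norm_num)

theorem encard_le_two_mul_coverNum (hS : IsSepSubset δ S E) :
    (S.encard : ℝ≥0∞) ≤ 2 * coverNum E δ := by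
  simp_rw [coverNum, ENNReal.mul_iInf_of_ne two_ne_zero ENNReal.ofNat_ne_top]
  refine le_iInf₂ fun T hT => ?_
  have hcover : S ⊆ ⋃ c ∈ T, S ∩ Icc c (c + δ) := fun τ hτ => by
    obtain ⟨c, hc, hτc⟩ := mem_iUnion₂.mp (hT (hS.1 hτ))
    exact mem_iUnion₂.mpr ⟨c, hc, hτ, hτc⟩
  have hcount : S.encard ≤ 2 * T.card := calc
    S.encard ≤ ∑ c ∈ T, (S ∩ Icc c (c + δ)).encard :=
      (encard_le_encard hcover).trans (T.set_encard_biUnion_le _)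
    _ ≤ ∑ _c ∈ T, 2 := Finset.sum_le_sum fun c _ => hS.encard_inter_Icc_le_two c
    _ = 2 * T.card := by rw [Finset.sum_const, nsmul_eq_mul, mul_comm]
  exact_mod_cast hcount

end IsSepSubset

theorem coverNum_inter_Icc_le_assouadChar (α : ℝ) (E : Set ℝ) {δ a b : ℝ} (hδ : 0 < δ)
    (hab : δ ≤ b - a) :
    coverNum (E ∩ Icc a b) δ ≤ ENNReal.ofReal (((b - a) / δ) ^ α) * assouadChar α E := by
  have hba : 0 < b - a := hδ.trans_le hab
  have hpos : 0 < (δ / (b - a)) ^ α := by positivity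
  have hle : ENNReal.ofReal ((δ / (b - a)) ^ α) * coverNum (E ∩ Icc a b) δ ≤ assouadChar α E :=
    le_iSup₂_of_le δ hδ <| le_iSup₂_of_le a b <| le_iSup_of_le hab le_rfl
  have hinv : ENNReal.ofReal (((b - a) / δ) ^ α) = (ENNReal.ofReal ((δ / (b - a)) ^ α))⁻¹ := by
    rw [← ENNReal.ofReal_inv_of_pos hpos, ← Real.inv_rpow (by positivity), inv_div]
  rw [hinv, mul_comm, ← div_eq_mul_inv, ENNReal.le_div_iff_mul_le
    (Or.inl (ENNReal.ofReal_pos.mpr hpos).ne') (Or.inl ENNReal.ofReal_ne_top), mul_comm]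
  exact hle

theorem IsSepSubset.encard_scaled_dist_le_assouadChar {α δ : ℝ} {S E : Set ℝ}
    (hS : IsSepSubset δ S E) (hδ : 0 < δ) (σ : ℝ) {R : ℝ} (hR : 1 / 2 ≤ R) :
    ({τ ∈ S | δ⁻¹ * |τ - σ| ≤ R}.encard : ℝ≥0∞) ≤
      2 * ENNReal.ofReal ((2 * R) ^ α) * assouadChar α E := by
  set I := Icc (σ - R * δ) (σ + R * δ)
  have hball : {τ ∈ S | δ⁻¹ * |τ - σ| ≤ R} ⊆ S ∩ I := fun τ ⟨hτ, hτR⟩ => by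
    have := abs_le.mp ((inv_mul_le_iff₀ hδ).mp hτR)
    exact ⟨hτ, by constructor <;> linarith⟩
  have hSI : IsSepSubset δ (S ∩ I) (E ∩ I) :=
    ⟨inter_subset_inter_left _ hS.1, fun τ hτ τ' hτ' => hS.2 τ hτ.1 τ' hτ'.1⟩
  have hlen : (σ + R * δ) - (σ - R * δ) = 2 * R * δ := by ring
  calc ({τ ∈ S | δ⁻¹ * |τ - σ| ≤ R}.encard : ℝ≥0∞)
      ≤ (S ∩ I).encard := by exact_mod_cast encard_le_encard hball
    _ ≤ 2 * coverNum (E ∩ I) δ := hSI.encard_le_two_mul_coverNum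
    _ ≤ 2 * (ENNReal.ofReal ((2 * R) ^ α) * assouadChar α E) := by
      have h := coverNum_inter_Icc_le_assouadChar α E hδ (a := σ - R * δ) (b := σ + R * δ)
        (by nlinarith)
      rw [hlen, mul_div_cancel_right₀ _ hδ.ne'] at h
      gcongr
    _ = 2 * ENNReal.ofReal ((2 * R) ^ α) * assouadChar α E := (mul_assoc _ _ _).symm

theorem ENNReal.tsum_ite_one_eq_encard {X : Type*} (S : Set X) (P : X → Prop)
    [DecidablePred P] :
    ∑' τ : S, (if P τ then (1 : ℝ≥0∞) else 0) = {τ ∈ S | P τ}.encard := by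
  rw [← ENNReal.tsum_set_one, tsum_subtype S (fun τ => if P τ then 1 else 0),
    tsum_subtype {τ ∈ S | P τ} (fun _ => 1)]
  congr 1 with τ
  by_cases hS : τ ∈ S <;> by_cases hP : P τ <;> simp [hS, hP, indicator]

theorem ofReal_one_add_rpow_neg_le_tsum {u p : ℝ} (hu : 0 ≤ u) (hp : 0 ≤ p) :
    ENNReal.ofReal ((1 + u) ^ (-p)) ≤
      ∑' k : ℕ, ENNReal.ofReal (2 ^ p) * ENNReal.ofReal (2 ^ (-p)) ^ k *
        (if u ≤ 2 ^ k then 1 else 0) := by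
  obtain ⟨n, hn, hn'⟩ := exists_nat_pow_near (by linarith : (1 : ℝ) ≤ 1 + u) one_lt_two
  refine le_trans ?_ (ENNReal.le_tsum (n + 1))
  rw [if_pos (by linarith), mul_one, ← ENNReal.ofReal_pow (by positivity),
    ← ENNReal.ofReal_mul (by positivity)]
  refine ENNReal.ofReal_le_ofReal ?_
  calc (1 + u) ^ (-p) ≤ ((2 : ℝ) ^ n) ^ (-p) :=
        Real.rpow_le_rpow_of_nonpos (by positivity) hn (by linarith)
    _ = 2 ^ p * (2 ^ (-p)) ^ (n + 1) := by
      rw [← Real.rpow_natCast, ← Real.rpow_natCast, ← Real.rpow_mul zero_le_two,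
        ← Real.rpow_mul zero_le_two, ← Real.rpow_add two_pos]
      push_cast
      ring_nf

theorem exists_tsum_rpow_neg_le_assouadChar {α p : ℝ} (hα : 0 ≤ α) (hαp : α < p) :
    ∃ M : ℝ≥0∞, M ≠ ∞ ∧ ∀ δ : ℝ, 0 < δ → ∀ S E : Set ℝ, IsSepSubset δ S E → ∀ σ : ℝ,
      ∑' τ : S, ENNReal.ofReal ((1 + δ⁻¹ * |(τ : ℝ) - σ|) ^ (-p)) ≤ M * assouadChar α E := by
  set c := ENNReal.ofReal (2 ^ p)
  set q := ENNReal.ofReal (2 ^ (-p))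
  set a := ENNReal.ofReal (2 ^ α)
  have hqa : q * a = ENNReal.ofReal (2 ^ (α - p)) := by
    rw [← ENNReal.ofReal_mul (by positivity), ← Real.rpow_add two_pos, neg_add_eq_sub]
  have hqa1 : q * a < 1 := by
    rw [hqa]
    exact ENNReal.ofReal_lt_one.mpr (Real.rpow_lt_one_of_one_lt_of_neg one_lt_two (by linarith))
  have hfin : (1 - q * a)⁻¹ ≠ ∞ := ENNReal.inv_ne_top.mpr (tsub_pos_of_lt hqa1).ne'
  refine ⟨2 * a * c * (1 - q * a)⁻¹, by finiteness, fun δ hδ S E hS σ => ?_⟩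
  have hball (k : ℕ) : ENNReal.ofReal ((2 * 2 ^ k) ^ α) = a * a ^ k := by
    rw [Real.mul_rpow zero_le_two (by positivity), ← Real.rpow_pow_comm zero_le_two,
      ENNReal.ofReal_mul (by positivity), ENNReal.ofReal_pow (by positivity)]
  calc ∑' τ : S, ENNReal.ofReal ((1 + δ⁻¹ * |(τ : ℝ) - σ|) ^ (-p))
      ≤ ∑' τ : S, ∑' k : ℕ, c * q ^ k * (if δ⁻¹ * |(τ : ℝ) - σ| ≤ 2 ^ k then 1 else 0) :=
        ENNReal.tsum_le_tsum fun τ =>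
          ofReal_one_add_rpow_neg_le_tsum (by positivity) (hα.trans hαp.le)
    _ = ∑' k : ℕ, c * q ^ k * {τ ∈ S | δ⁻¹ * |τ - σ| ≤ 2 ^ k}.encard := by
        rw [ENNReal.tsum_comm]
        refine tsum_congr fun k => ?_
        rw [ENNReal.tsum_mul_left, ENNReal.tsum_ite_one_eq_encard S (δ⁻¹ * |· - σ| ≤ 2 ^ k)]
    _ ≤ ∑' k : ℕ, c * q ^ k * (2 * (a * a ^ k) * assouadChar α E) := by
        gcongr with k
        rw [← hball]
        exact hS.encard_scaled_dist_le_assouadChar hδ σ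
          ((by norm_num : (1 : ℝ) / 2 ≤ 1).trans (one_le_pow₀ one_le_two))
    _ = 2 * a * c * assouadChar α E * ∑' k : ℕ, (q * a) ^ k := by
        rw [← ENNReal.tsum_mul_left]
        congr 1 with k
        ring
    _ = 2 * a * c * (1 - q * a)⁻¹ * assouadChar α E := by
        rw [ENNReal.tsum_geometric]
        ring

theorem exists_lqNorm_le_assouadChar {α β s : ℝ} (hα : 0 ≤ α) (hs : 0 < s) (hαβ : α < β * s) :
    ∃ C : ℝ, 0 < C ∧ ∀ δ : ℝ, 0 < δ → ∀ S E : Set ℝ, IsSepSubset δ S E → ∀ σ : ℝ,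
      lqNorm (ENNReal.ofReal s) S (fun τ => ENNReal.ofReal ((1 + δ⁻¹ * |τ - σ|) ^ (-β)))
        ≤ ENNReal.ofReal C * assouadChar α E ^ (1 / s) := by
  obtain ⟨M, hM, hsum⟩ := exists_tsum_rpow_neg_le_assouadChar hα hαβ
  refine ⟨(M ^ (1 / s)).toReal + 1, by positivity, fun δ hδ S E hS σ => ?_⟩
  have hpow (τ : ℝ) : ENNReal.ofReal ((1 + δ⁻¹ * |τ - σ|) ^ (-β)) ^ s =
      ENNReal.ofReal ((1 + δ⁻¹ * |τ - σ|) ^ (-(β * s))) := by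
    rw [ENNReal.ofReal_rpow_of_nonneg (by positivity) hs.le, ← Real.rpow_mul (by positivity),
      neg_mul]
  rw [lqNorm, if_neg ENNReal.ofReal_ne_top, ENNReal.toReal_ofReal hs.le]
  simp_rw [hpow]
  calc (∑' τ : S, ENNReal.ofReal ((1 + δ⁻¹ * |(τ : ℝ) - σ|) ^ (-(β * s)))) ^ (1 / s)
      ≤ (M * assouadChar α E) ^ (1 / s) :=
        ENNReal.rpow_le_rpow (hsum δ hδ S E hS σ) (by positivity)
    _ = M ^ (1 / s) * assouadChar α E ^ (1 / s) := ENNReal.mul_rpow_of_nonneg _ _ (by positivity)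
    _ ≤ ENNReal.ofReal ((M ^ (1 / s)).toReal + 1) * assouadChar α E ^ (1 / s) := by
      gcongr
      exact (ENNReal.le_ofReal_iff_toReal_le (ENNReal.rpow_ne_top_of_nonneg (by positivity) hM)
        (by positivity)).mpr (by linarith)

theorem weakLqNorm_le_assouadChar {α β s δ : ℝ} {S E : Set ℝ} (hα : 0 < α) (hs : 0 < s)
    (hβs : β * s = α) (hδ : 0 < δ) (hS : IsSepSubset δ S E) (σ : ℝ) :
    weakLqNorm s S (fun τ => ENNReal.ofReal ((1 + δ⁻¹ * |τ - σ|) ^ (-β))) ≤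
      ENNReal.ofReal ((2 * 2 ^ α) ^ (1 / s)) * assouadChar α E ^ (1 / s) := by
  have hβ : 0 < β := pos_of_mul_pos_left (hβs ▸ hα) hs.le
  rw [weakLqNorm, ← ENNReal.ofReal_rpow_of_nonneg (by positivity) (by positivity),
    ← ENNReal.mul_rpow_of_nonneg _ _ (by positivity)]
  refine iSup₂_le fun l hl => ?_
  set L := {τ ∈ S | ENNReal.ofReal l < ENNReal.ofReal ((1 + δ⁻¹ * |τ - σ|) ^ (-β))}
  rcases le_or_gt 1 l with hl1 | hl1
  · have hL : L = ∅ := eq_empty_of_forall_notMem fun τ ⟨_, hlt⟩ => hlt.not_ge <|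
      ENNReal.ofReal_le_ofReal <| (Real.rpow_le_one_of_one_le_of_nonpos
        (le_add_of_nonneg_right (by positivity)) (by linarith)).trans hl1
    simp [hL, hs]
  -- `l < (1 + x)^{-β} ↔ 1 + x < l^{-1/β}`: superlevel sets of the kernel are scaled balls
  set R := l ^ (-β)⁻¹
  have hR : 1 ≤ R := Real.one_le_rpow_of_pos_of_le_one_of_nonpos hl hl1.le
    (inv_nonpos.mpr (by linarith))
  have hLR : L ⊆ {τ ∈ S | δ⁻¹ * |τ - σ| ≤ R} := fun τ ⟨hτ, hlt⟩ => by
    have hlt' := (ENNReal.ofReal_lt_ofReal_iff_of_nonneg hl.le).mp hlt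
    rw [← Real.lt_rpow_inv_iff_of_neg (by positivity) hl (by linarith)] at hlt'
    exact ⟨hτ, by linarith⟩
  have hRl : l ^ s * R ^ α = 1 := by
    rw [← Real.rpow_mul hl.le, ← Real.rpow_add hl, ← hβs]
    field_simp
    simp
  have hl_eq : ENNReal.ofReal l = ENNReal.ofReal (l ^ s) ^ (1 / s) := by
    rw [ENNReal.ofReal_rpow_of_nonneg (by positivity) (by positivity), ← Real.rpow_mul hl.le,
      mul_one_div_cancel hs.ne', Real.rpow_one]
  rw [hl_eq, ← ENNReal.mul_rpow_of_nonneg _ _ (by positivity)]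
  refine ENNReal.rpow_le_rpow ?_ (by positivity)
  calc ENNReal.ofReal (l ^ s) * L.encard
      ≤ ENNReal.ofReal (l ^ s) * (2 * ENNReal.ofReal ((2 * R) ^ α) * assouadChar α E) := by
        gcongr
        exact (ENat.toENNReal_le.mpr (encard_le_encard hLR)).trans
          (hS.encard_scaled_dist_le_assouadChar hδ σ (by linarith))
    _ = ENNReal.ofReal (2 * 2 ^ α * (l ^ s * R ^ α)) * assouadChar α E := by
        rw [Real.mul_rpow zero_le_two (by positivity)]
        simp (disch := positivity) only [ENNReal.ofReal_mul, ENNReal.ofReal_ofNat]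
        ring
    _ = ENNReal.ofReal (2 * 2 ^ α) * assouadChar α E := by rw [hRl, mul_one]

theorem dispersive_kernel_lq_bounds_general
    (d : ℕ) (γ : ℝ)
    (α : ℝ) (hα : α ∈ Set.Ioc (0:ℝ) 1) (r : ℝ)
    (E : Set ℝ) (sexp : ℝ) (hsexp : 1 ≤ sexp) :
    ((α / sexp < (d : ℝ) * (1 / 2 - 1 / r)) →
      ∃ C : ℝ, 0 < C ∧ ∀ (j : ℤ) (Ej : Set ℝ),
        IsMaxSepSubset ((2:ℝ) ^ (-(γ * j))) Ej E →
        (∀ τ' ∈ Ej,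
          lqNorm (ENNReal.ofReal sexp) Ej (fun τ =>
            ENNReal.ofReal ((1 + (2:ℝ) ^ (γ * (j:ℝ)) * |τ - τ'|) ^ (-((d:ℝ) * (1 / 2 - 1 / r)))))
            ≤ ENNReal.ofReal C * assouadChar α E ^ (1 / sexp)) ∧
        (∀ τ ∈ Ej,
          lqNorm (ENNReal.ofReal sexp) Ej (fun τ' =>
            ENNReal.ofReal ((1 + (2:ℝ) ^ (γ * (j:ℝ)) * |τ - τ'|) ^ (-((d:ℝ) * (1 / 2 - 1 / r)))))
            ≤ ENNReal.ofReal C * assouadChar α E ^ (1 / sexp))) ∧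
    (((d : ℝ) * (1 / 2 - 1 / r) = α / sexp) →
      ∃ C : ℝ, 0 < C ∧ ∀ (j : ℤ) (Ej : Set ℝ),
        IsMaxSepSubset ((2:ℝ) ^ (-(γ * j))) Ej E →
        (∀ τ' ∈ Ej,
          weakLqNorm sexp Ej (fun τ =>
            ENNReal.ofReal ((1 + (2:ℝ) ^ (γ * (j:ℝ)) * |τ - τ'|) ^ (-((d:ℝ) * (1 / 2 - 1 / r)))))
            ≤ ENNReal.ofReal C * assouadChar α E ^ (1 / sexp)) ∧
        (∀ τ ∈ Ej,
          weakLqNorm sexp Ej (fun τ' =>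
            ENNReal.ofReal ((1 + (2:ℝ) ^ (γ * (j:ℝ)) * |τ - τ'|) ^ (-((d:ℝ) * (1 / 2 - 1 / r)))))
            ≤ ENNReal.ofReal C * assouadChar α E ^ (1 / sexp))) := by
  have hs : 0 < sexp := by linarith
  have hscale (j : ℤ) : (2:ℝ) ^ (γ * (j:ℝ)) = ((2:ℝ) ^ (-(γ * j)))⁻¹ := by
    rw [Real.rpow_neg zero_le_two, inv_inv]
  refine ⟨fun hlt => ?_, fun heq => ?_⟩
  · obtain ⟨C, hC, hbound⟩ := exists_lqNorm_le_assouadChar hα.1.le hs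
      ((div_lt_iff₀ hs).mp hlt)
    refine ⟨C, hC, fun j Ej hEj => ⟨fun τ' _ => ?_, fun τ _ => ?_⟩⟩
    · simpa only [hscale] using hbound _ (by positivity) Ej E hEj.1 τ'
    · simpa only [hscale, abs_sub_comm τ] using hbound _ (by positivity) Ej E hEj.1 τ
  · have hβs : (d : ℝ) * (1 / 2 - 1 / r) * sexp = α := by rw [heq, div_mul_cancel₀ _ hs.ne']
    refine ⟨(2 * 2 ^ α) ^ (1 / sexp), by positivity,
      fun j Ej hEj => ⟨fun τ' _ => ?_, fun τ _ => ?_⟩⟩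
    · simpa only [hscale] using
        weakLqNorm_le_assouadChar hα.1 hs hβs (by positivity) hEj.1 τ'
    · simpa only [hscale, abs_sub_comm τ] using
        weakLqNorm_le_assouadChar hα.1 hs hβs (by positivity) hEj.1 τ

theorem dispersive_kernel_lq_bounds
    (d : ℕ) (hd : 1 ≤ d) (γ : ℝ) (hγ : 0 < γ) (hγ1 : γ ≠ 1)
    (α : ℝ) (hα : α ∈ Set.Ioc (0:ℝ) 1) (r : ℝ) (hr : 2 < r)
    (E : Set ℝ) (hEA : assouadChar α E ≠ ∞) (sexp : ℝ) (hsexp : 1 ≤ sexp) :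
    ((α / sexp < (d : ℝ) * (1 / 2 - 1 / r)) →
      ∃ C : ℝ, 0 < C ∧ ∀ (j : ℤ) (Ej : Set ℝ),
        IsMaxSepSubset ((2:ℝ) ^ (-(γ * j))) Ej E →
        (∀ τ' ∈ Ej,
          lqNorm (ENNReal.ofReal sexp) Ej (fun τ =>
            ENNReal.ofReal ((1 + (2:ℝ) ^ (γ * (j:ℝ)) * |τ - τ'|) ^ (-((d:ℝ) * (1 / 2 - 1 / r)))))
            ≤ ENNReal.ofReal C * assouadChar α E ^ (1 / sexp)) ∧
        (∀ τ ∈ Ej,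
          lqNorm (ENNReal.ofReal sexp) Ej (fun τ' =>
            ENNReal.ofReal ((1 + (2:ℝ) ^ (γ * (j:ℝ)) * |τ - τ'|) ^ (-((d:ℝ) * (1 / 2 - 1 / r)))))
            ≤ ENNReal.ofReal C * assouadChar α E ^ (1 / sexp))) ∧
    (((d : ℝ) * (1 / 2 - 1 / r) = α / sexp) →
      ∃ C : ℝ, 0 < C ∧ ∀ (j : ℤ) (Ej : Set ℝ),
        IsMaxSepSubset ((2:ℝ) ^ (-(γ * j))) Ej E →
        (∀ τ' ∈ Ej,
          weakLqNorm sexp Ej (fun τ =>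
            ENNReal.ofReal ((1 + (2:ℝ) ^ (γ * (j:ℝ)) * |τ - τ'|) ^ (-((d:ℝ) * (1 / 2 - 1 / r)))))
            ≤ ENNReal.ofReal C * assouadChar α E ^ (1 / sexp)) ∧
        (∀ τ ∈ Ej,
          weakLqNorm sexp Ej (fun τ' =>
            ENNReal.ofReal ((1 + (2:ℝ) ^ (γ * (j:ℝ)) * |τ - τ'|) ^ (-((d:ℝ) * (1 / 2 - 1 / r)))))
            ≤ ENNReal.ofReal C * assouadChar α E ^ (1 / sexp))) :=
  dispersive_kernel_lq_bounds_general d γ α hα r E sexp hsexp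

end
end

section
/- Let d ≥ 1 be an integer, γ > 0, α ∈ (0,1], r > 2, and j ∈ ℤ, and define 𝓚_r(t,s) = (1 + 2^{γj}|t−s|)^{−d(1/2 − 1/r)} for t, s ∈ ℝ. Let μ be a positive Borel measure on ℝ satisfying the α-dimensional growth condition. (i) If d(1/2 − 1/r) > α/σ for some σ ∈ [1,∞), then sup_{s∈ℝ} ‖𝓚_r(·, s)‖_{L^σ(dμ)} ≤ C ⟨μ⟩_α^{1/σ} 2^{−γα j/σ} and sup_{t∈ℝ} ‖𝓚_r(t, ·)‖_{L^σ(dμ)} ≤ C ⟨μ⟩_α^{1/σ} 2^{−γα j/σ}, with C independent of j. (ii) If d(1/2 − 1/r) = α/σ, then the corresponding bounds hold with the weak-L^{σ,∞}(dμ) quasinorm in place of the L^σ(dμ) norm, with C independent of j. -/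
open MeasureTheory Complex Set Metric
open scoped ENNReal NNReal Classical

noncomputable section

/-! The kernel `(1 + a|x - c|)^(-q)` exceeds `l > 0` only on the ball of radius `l^(-1/q) / a`
about `c`, so the growth condition bounds its distribution function by `⟨μ⟩_α a^(-α) l^(-α/q)`,
and it vanishes for `l ≥ 1`. In the critical case `qσ = α` this is the weak `L^σ` bound; in the
subcritical case the layer-cake formula bounds the integral of the `σ`-th power by
`⟨μ⟩_α a^(-α) ∫_0^1 l^(-α/(σq)) dl`. The theorem is the case `a = 2^(γj)`. -/

lemma measure_ball_le_growthConst (α : ℝ) (μ : Measure ℝ) (t : ℝ) {ρ : ℝ} (hρ : 0 < ρ) :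
    μ (ball t ρ) ≤ growthConst α μ * ENNReal.ofReal (ρ ^ α) := by
  rw [← ENNReal.div_le_iff_le_mul (Or.inl (by positivity)) (Or.inl ENNReal.ofReal_ne_top),
    Real.ball_eq_Ioo]
  exact le_iSup₂_of_le t ρ (le_iSup_of_le hρ le_rfl)

lemma lintegral_Ioo_zero_one_rpow {p : ℝ} (hp : -1 < p) :
    ∫⁻ x in Ioo (0:ℝ) 1, ENNReal.ofReal (x ^ p) = ENNReal.ofReal ((p + 1)⁻¹) := by
  rw [← ofReal_integral_eq_lintegral_ofReal
      ((intervalIntegral.integrableOn_Ioo_rpow_iff one_pos).mpr hp)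
      (ae_restrict_of_forall_mem measurableSet_Ioo fun x hx => Real.rpow_nonneg hx.1.le p),
    ← integral_Ioc_eq_integral_Ioo, ← intervalIntegral.integral_of_le zero_le_one,
    integral_rpow (Or.inl hp), Real.one_rpow, Real.zero_rpow (by linarith), sub_zero, one_div]

section DecayKernel

variable {a c l q β σ : ℝ}

lemma setOf_lt_decay_subset_ball (ha : 0 < a) (hq : 0 < q) (hl : 0 < l) :
    {x : ℝ | l < (1 + a * |x - c|) ^ (-q)} ⊆ ball c (l ^ (-q)⁻¹ / a) := by
  intro x hx
  have hlt : 1 + a * |x - c| < l ^ (-q)⁻¹ :=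
    (Real.lt_rpow_inv_iff_of_neg (by positivity) hl (neg_neg_of_pos hq)).mpr hx
  rw [mem_ball, Real.dist_eq, lt_div_iff₀ ha]
  linarith

lemma setOf_lt_decay_eq_empty (hq : 0 ≤ q) (ha : 0 ≤ a) (hl : 1 ≤ l) :
    {x : ℝ | l < (1 + a * |x - c|) ^ (-q)} = ∅ := by
  refine eq_empty_of_forall_notMem fun x hx => ?_
  have hle : (1 + a * |x - c|) ^ (-q) ≤ 1 :=
    Real.rpow_le_one_of_one_le_of_nonpos (le_add_of_nonneg_right (by positivity))
      (neg_nonpos.mpr hq)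
  exact (hl.trans_lt hx).not_ge hle

lemma measure_setOf_lt_decay_le (α : ℝ) (μ : Measure ℝ) (ha : 0 < a) (hq : 0 < q)
    (hl : 0 < l) :
    μ {x : ℝ | l < (1 + a * |x - c|) ^ (-q)} ≤
      growthConst α μ * ENNReal.ofReal (a ^ (-α) * l ^ (-(α / q))) := by
  have hradius : (l ^ (-q)⁻¹ / a) ^ α = a ^ (-α) * l ^ (-(α / q)) := by
    rw [Real.div_rpow (by positivity) ha.le, ← Real.rpow_mul hl.le, Real.rpow_neg ha.le]
    field_simp
  rw [← hradius]
  exact (measure_mono (setOf_lt_decay_subset_ball ha hq hl)).trans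
    (measure_ball_le_growthConst α μ c (by positivity))

lemma lintegral_decay_le (α : ℝ) (μ : Measure ℝ) (ha : 0 < a) (hq : 0 < q) (hαq : α < q) :
    ∫⁻ x, ENNReal.ofReal ((1 + a * |x - c|) ^ (-q)) ∂μ ≤
      growthConst α μ * ENNReal.ofReal (a ^ (-α)) * ENNReal.ofReal ((1 - α / q)⁻¹) := by
  have hmeas : Measurable fun x : ℝ => (1 + a * |x - c|) ^ (-q) := by
    exact (Continuous.rpow_const (by fun_prop) fun x => Or.inl (by positivity)).measurable
  have hlevel : ∀ l ∈ Ioi (0:ℝ), μ {x : ℝ | l < (1 + a * |x - c|) ^ (-q)} ≤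
      (Ioo (0:ℝ) 1).indicator
        (fun l => growthConst α μ * ENNReal.ofReal (a ^ (-α)) *
          ENNReal.ofReal (l ^ (-(α / q)))) l := by
    intro l (hl : 0 < l)
    by_cases hl1 : l < 1
    · rw [indicator_of_mem (show l ∈ Ioo (0:ℝ) 1 from ⟨hl, hl1⟩), mul_assoc,
        ← ENNReal.ofReal_mul (by positivity)]
      exact measure_setOf_lt_decay_le α μ ha hq hl
    · rw [setOf_lt_decay_eq_empty hq.le ha.le (not_lt.mp hl1), measure_empty]
      exact zero_le
  calc ∫⁻ x, ENNReal.ofReal ((1 + a * |x - c|) ^ (-q)) ∂μ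
      = ∫⁻ l in Ioi 0, μ {x : ℝ | l < (1 + a * |x - c|) ^ (-q)} :=
        lintegral_eq_lintegral_meas_lt μ (ae_of_all _ fun x => by positivity)
          hmeas.aemeasurable
    _ ≤ ∫⁻ l in Ioi 0, (Ioo (0:ℝ) 1).indicator
          (fun l => growthConst α μ * ENNReal.ofReal (a ^ (-α)) *
            ENNReal.ofReal (l ^ (-(α / q)))) l :=
        setLIntegral_mono' measurableSet_Ioi hlevel
    _ = growthConst α μ * ENNReal.ofReal (a ^ (-α)) * ENNReal.ofReal ((1 - α / q)⁻¹) := by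
      rw [lintegral_indicator measurableSet_Ioo, Measure.restrict_restrict measurableSet_Ioo,
        inter_eq_left.mpr Ioo_subset_Ioi_self, lintegral_const_mul _ (by fun_prop),
        lintegral_Ioo_zero_one_rpow (by rw [neg_lt_neg_iff, div_lt_one hq]; exact hαq),
        neg_add_eq_sub]

lemma lintegral_decay_rpow_rpow_le (α : ℝ) (μ : Measure ℝ) (ha : 0 < a) (hβ : 0 < β)
    (hσ : 0 < σ) (hαβ : α < σ * β) :
    (∫⁻ x, ENNReal.ofReal ((1 + a * |x - c|) ^ (-β)) ^ σ ∂μ) ^ (1 / σ) ≤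
      ENNReal.ofReal ((1 - α / (σ * β))⁻¹ ^ (1 / σ)) * growthConst α μ ^ (1 / σ) *
        ENNReal.ofReal (a ^ (-α / σ)) := by
  have hσ' : 0 ≤ 1 / σ := by positivity
  have hpow : ∀ x, ENNReal.ofReal ((1 + a * |x - c|) ^ (-β)) ^ σ =
      ENNReal.ofReal ((1 + a * |x - c|) ^ (-(σ * β))) := fun x => by
    rw [ENNReal.ofReal_rpow_of_nonneg (by positivity) hσ.le, ← Real.rpow_mul (by positivity),
      neg_mul, mul_comm β σ]
  have hconst : 0 ≤ (1 - α / (σ * β))⁻¹ :=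
    inv_nonneg.mpr (sub_nonneg.mpr ((div_le_one (by positivity)).mpr hαβ.le))
  calc (∫⁻ x, ENNReal.ofReal ((1 + a * |x - c|) ^ (-β)) ^ σ ∂μ) ^ (1 / σ)
      ≤ (growthConst α μ * ENNReal.ofReal (a ^ (-α)) *
          ENNReal.ofReal ((1 - α / (σ * β))⁻¹)) ^ (1 / σ) := by
        simp only [hpow]
        exact ENNReal.rpow_le_rpow (lintegral_decay_le α μ ha (by positivity) hαβ) hσ'
    _ = _ := by
        rw [ENNReal.mul_rpow_of_nonneg _ _ hσ', ENNReal.mul_rpow_of_nonneg _ _ hσ',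
          ENNReal.ofReal_rpow_of_nonneg (by positivity) hσ',
          ENNReal.ofReal_rpow_of_nonneg hconst hσ', ← Real.rpow_mul ha.le, neg_mul,
          ← div_eq_mul_one_div, neg_div]
        ring

lemma iSup_mul_measure_setOf_lt_decay_rpow_le (α : ℝ) (μ : Measure ℝ) (ha : 0 < a)
    (hβ : 0 < β) (hσ : 0 < σ) (hβσ : β = α / σ) :
    ⨆ (l : ℝ) (_ : 0 < l), ENNReal.ofReal l *
        μ {x : ℝ | l < (1 + a * |x - c|) ^ (-β)} ^ (1 / σ) ≤
      growthConst α μ ^ (1 / σ) * ENNReal.ofReal (a ^ (-α / σ)) := by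
  have hσ' : 0 ≤ 1 / σ := by positivity
  have hα : α / β = σ := by
    rw [hβσ, div_div_cancel₀ (by rintro rfl; simp_all)]
  refine iSup₂_le fun l hl => ?_
  have hscale : (a ^ (-α) * l ^ (-(α / β))) ^ (1 / σ) = a ^ (-α / σ) * l⁻¹ := by
    rw [hα, Real.mul_rpow (by positivity) (by positivity), ← Real.rpow_mul ha.le,
      ← Real.rpow_mul hl.le, neg_mul, neg_mul, mul_one_div_cancel hσ.ne', Real.rpow_neg_one,
      mul_one_div, neg_div]
  calc ENNReal.ofReal l * μ {x : ℝ | l < (1 + a * |x - c|) ^ (-β)} ^ (1 / σ)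
      ≤ ENNReal.ofReal l *
          (growthConst α μ * ENNReal.ofReal (a ^ (-α) * l ^ (-(α / β)))) ^ (1 / σ) :=
        mul_le_mul_right (ENNReal.rpow_le_rpow (measure_setOf_lt_decay_le α μ ha hβ hl) hσ') _
    _ = growthConst α μ ^ (1 / σ) * ENNReal.ofReal (a ^ (-α / σ)) *
          ENNReal.ofReal (l * l⁻¹) := by
        rw [ENNReal.mul_rpow_of_nonneg _ _ hσ', ENNReal.ofReal_rpow_of_nonneg (by positivity) hσ',
          hscale, ENNReal.ofReal_mul (by positivity), ENNReal.ofReal_mul hl.le]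
        ring
    _ = growthConst α μ ^ (1 / σ) * ENNReal.ofReal (a ^ (-α / σ)) := by
        rw [mul_inv_cancel₀ hl.ne', ENNReal.ofReal_one, mul_one]

end DecayKernel

theorem dispersive_kernel_Lsigma_mu_bounds_general
    (d : ℕ) (hd : 1 ≤ d) (γ : ℝ)
    (α : ℝ) (r : ℝ) (hr : 2 < r)
    (μ : Measure ℝ)
    (σ : ℝ) (hσ : 1 ≤ σ) :
    ((α / σ < (d : ℝ) * (1 / 2 - 1 / r)) →
      ∃ C : ℝ, 0 < C ∧ ∀ (j : ℤ),
        (∀ s : ℝ,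
          (∫⁻ t, ENNReal.ofReal
              ((1 + (2:ℝ) ^ (γ * (j:ℝ)) * |t - s|) ^ (-((d:ℝ) * (1 / 2 - 1 / r)))) ^ σ ∂μ)
              ^ (1 / σ)
            ≤ ENNReal.ofReal C * growthConst α μ ^ (1 / σ) *
                ENNReal.ofReal ((2:ℝ) ^ (-(γ * α * (j:ℝ)) / σ))) ∧
        (∀ t : ℝ,
          (∫⁻ s, ENNReal.ofReal
              ((1 + (2:ℝ) ^ (γ * (j:ℝ)) * |t - s|) ^ (-((d:ℝ) * (1 / 2 - 1 / r)))) ^ σ ∂μ)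
              ^ (1 / σ)
            ≤ ENNReal.ofReal C * growthConst α μ ^ (1 / σ) *
                ENNReal.ofReal ((2:ℝ) ^ (-(γ * α * (j:ℝ)) / σ)))) ∧
    (((d : ℝ) * (1 / 2 - 1 / r) = α / σ) →
      ∃ C : ℝ, 0 < C ∧ ∀ (j : ℤ),
        (∀ s : ℝ,
          (⨆ (l : ℝ) (_ : 0 < l), ENNReal.ofReal l *
              μ {t : ℝ | l < (1 + (2:ℝ) ^ (γ * (j:ℝ)) * |t - s|) ^ (-((d:ℝ) * (1 / 2 - 1 / r)))}
                ^ (1 / σ))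
            ≤ ENNReal.ofReal C * growthConst α μ ^ (1 / σ) *
                ENNReal.ofReal ((2:ℝ) ^ (-(γ * α * (j:ℝ)) / σ))) ∧
        (∀ t : ℝ,
          (⨆ (l : ℝ) (_ : 0 < l), ENNReal.ofReal l *
              μ {s : ℝ | l < (1 + (2:ℝ) ^ (γ * (j:ℝ)) * |t - s|) ^ (-((d:ℝ) * (1 / 2 - 1 / r)))}
                ^ (1 / σ))
            ≤ ENNReal.ofReal C * growthConst α μ ^ (1 / σ) *
                ENNReal.ofReal ((2:ℝ) ^ (-(γ * α * (j:ℝ)) / σ)))) := by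
  set β : ℝ := (d : ℝ) * (1 / 2 - 1 / r)
  have hσ0 : 0 < σ := by linarith
  have hβ : 0 < β := mul_pos (by exact_mod_cast hd)
    (sub_pos.mpr (one_div_lt_one_div_of_lt two_pos hr))
  have hscale : ∀ j : ℤ, 0 < (2:ℝ) ^ (γ * j) := fun j => by positivity
  have hscale_rpow : ∀ j : ℤ, ((2:ℝ) ^ (γ * j)) ^ (-α / σ) = (2:ℝ) ^ (-(γ * α * j) / σ) :=
    fun j => by rw [← Real.rpow_mul zero_le_two]; ring_nf
  refine ⟨fun h => ?_, fun h => ?_⟩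
  · have hαβ : α < σ * β := by rwa [div_lt_iff₀ hσ0, mul_comm] at h
    have hconst : 0 < 1 - α / (σ * β) := sub_pos.mpr ((div_lt_one (by positivity)).mpr hαβ)
    refine ⟨_, Real.rpow_pos_of_pos (inv_pos.mpr hconst) (1 / σ), fun j =>
      ⟨fun s => ?_, fun t => ?_⟩⟩ <;> rw [← hscale_rpow]
    · exact lintegral_decay_rpow_rpow_le α μ (hscale j) hβ hσ0 hαβ
    · simp_rw [abs_sub_comm t]
      exact lintegral_decay_rpow_rpow_le α μ (hscale j) hβ hσ0 hαβ
  · refine ⟨1, one_pos, fun j => ⟨fun s => ?_, fun t => ?_⟩⟩ <;>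
      rw [ENNReal.ofReal_one, one_mul, ← hscale_rpow]
    · exact iSup_mul_measure_setOf_lt_decay_rpow_le α μ (hscale j) hβ hσ0 h
    · simp_rw [abs_sub_comm t]
      exact iSup_mul_measure_setOf_lt_decay_rpow_le α μ (hscale j) hβ hσ0 h

theorem dispersive_kernel_Lsigma_mu_bounds
    (d : ℕ) (hd : 1 ≤ d) (γ : ℝ) (hγ : 0 < γ)
    (α : ℝ) (hα : α ∈ Set.Ioc (0:ℝ) 1) (r : ℝ) (hr : 2 < r)
    (μ : Measure ℝ) (hμα : growthConst α μ ≠ ∞)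
    (σ : ℝ) (hσ : 1 ≤ σ) :
    ((α / σ < (d : ℝ) * (1 / 2 - 1 / r)) →
      ∃ C : ℝ, 0 < C ∧ ∀ (j : ℤ),
        (∀ s : ℝ,
          (∫⁻ t, ENNReal.ofReal
              ((1 + (2:ℝ) ^ (γ * (j:ℝ)) * |t - s|) ^ (-((d:ℝ) * (1 / 2 - 1 / r)))) ^ σ ∂μ)
              ^ (1 / σ)
            ≤ ENNReal.ofReal C * growthConst α μ ^ (1 / σ) *
                ENNReal.ofReal ((2:ℝ) ^ (-(γ * α * (j:ℝ)) / σ))) ∧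
        (∀ t : ℝ,
          (∫⁻ s, ENNReal.ofReal
              ((1 + (2:ℝ) ^ (γ * (j:ℝ)) * |t - s|) ^ (-((d:ℝ) * (1 / 2 - 1 / r)))) ^ σ ∂μ)
              ^ (1 / σ)
            ≤ ENNReal.ofReal C * growthConst α μ ^ (1 / σ) *
                ENNReal.ofReal ((2:ℝ) ^ (-(γ * α * (j:ℝ)) / σ)))) ∧
    (((d : ℝ) * (1 / 2 - 1 / r) = α / σ) →
      ∃ C : ℝ, 0 < C ∧ ∀ (j : ℤ),
        (∀ s : ℝ,
          (⨆ (l : ℝ) (_ : 0 < l), ENNReal.ofReal l *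
              μ {t : ℝ | l < (1 + (2:ℝ) ^ (γ * (j:ℝ)) * |t - s|) ^ (-((d:ℝ) * (1 / 2 - 1 / r)))}
                ^ (1 / σ))
            ≤ ENNReal.ofReal C * growthConst α μ ^ (1 / σ) *
                ENNReal.ofReal ((2:ℝ) ^ (-(γ * α * (j:ℝ)) / σ))) ∧
        (∀ t : ℝ,
          (⨆ (l : ℝ) (_ : 0 < l), ENNReal.ofReal l *
              μ {s : ℝ | l < (1 + (2:ℝ) ^ (γ * (j:ℝ)) * |t - s|) ^ (-((d:ℝ) * (1 / 2 - 1 / r)))}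
                ^ (1 / σ))
            ≤ ENNReal.ofReal C * growthConst α μ ^ (1 / σ) *
                ENNReal.ofReal ((2:ℝ) ^ (-(γ * α * (j:ℝ)) / σ)))) :=
  dispersive_kernel_Lsigma_mu_bounds_general d hd γ α r hr μ σ hσ

end
end
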